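/- arXiv:math/9704220 — 5 statements merged into one kernel-verified Lean document; each statement's English description precedes it below -/
import Mathlib

section
/- Let 1 < α < 2 be irrational and set α' = α/(α-1). Then 1/α + 1/α' = 1, and for every positive integer n, the nearest integer multiple of α to n is greater than n if and only if the nearest integer multiple of α' to n is less than n (i.e., A_α = B_{α'}). -/
/-! Write `α' = α/(α-1)`. Then `n/α' = n - n/α`, and since `n/α` is irrational for `n > 0`
it is never a half-integer, so rounding commutes with its negation and
`round (n/α') = n - round (n/α)`. Hence `E α' n = -E α n / (α - 1)`, whose sign is opposite
to that of `E α n` because `α > 1`. -/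

/-- `E α n` is the error `n - qα` where `qα` is the integer multiple of `α`
nearest to `n` (for `α > 1`, this multiple is `round (n/α) * α`). -/
noncomputable def E (α : ℝ) (n : ℕ) : ℝ := (n : ℝ) - round ((n : ℝ) / α) * α

/-- `A_α`: positive integers whose nearest multiple of `α` exceeds them. -/
def Aset (α : ℝ) : Set ℕ := {n | 0 < n ∧ E α n < 0}

/-- `B_α`: positive integers whose nearest multiple of `α` is below them. -/
def Bset (α : ℝ) : Set ℕ := {n | 0 < n ∧ 0 < E α n}

/-- `S_α`: positive integers not expressible as a sum of two distinct elements
of `A_α` nor of two distinct elements of `B_α`. -/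
def Sset (α : ℝ) : Set ℕ :=
  {s | 0 < s ∧ (∀ x ∈ Aset α, ∀ y ∈ Aset α, x ≠ y → x + y ≠ s) ∧
       (∀ x ∈ Bset α, ∀ y ∈ Bset α, x ≠ y → x + y ≠ s)}

theorem round_neg_of_irrational {x : ℝ} (hx : Irrational x) : round (-x) = -round x := by
  have hceil : ⌈x - 1 / 2⌉ = ⌊x - 1 / 2⌋ + 1 :=
    (Int.ceil_eq_floor_add_one_iff_notMem _).2 fun ⟨m, hm⟩ =>
      (hx.sub_ratCast (1 / 2)).ne_int m (by rw [hm]; push_cast; ring)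
  rw [round_eq, round_eq, show -x + 1 / 2 = -(x - 1 / 2) by ring, Int.floor_neg,
    show x + 1 / 2 = x - 1 / 2 + 1 by ring, Int.floor_add_one, hceil]

theorem round_natCast_div_div_sub_one {α : ℝ} (hirr : Irrational α) (n : ℕ) :
    round ((n : ℝ) / (α / (α - 1))) = n - round ((n : ℝ) / α) := by
  rcases eq_or_ne n 0 with rfl | hn
  · simp
  have hsplit : (n : ℝ) / (α / (α - 1)) = n + -(n / α) := by
    field_simp [hirr.ne_zero]
    ring
  have hirr_div : Irrational ((n : ℝ) / α) := by
    simpa [div_eq_mul_inv] using hirr.inv.natCast_mul hn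
  rw [hsplit, round_natCast_add, round_neg_of_irrational hirr_div, sub_eq_add_neg]

theorem E_div_sub_one {α : ℝ} (hirr : Irrational α) (hα : α ≠ 1) (n : ℕ) :
    E (α / (α - 1)) n = -E α n / (α - 1) := by
  rw [E, E, round_natCast_div_div_sub_one hirr]
  push_cast
  field_simp [sub_ne_zero.2 hα]
  ring

theorem stmt1_general (α : ℝ) (h1 : 1 < α) (hirr : Irrational α) :
    1 / α + 1 / (α / (α - 1)) = 1 ∧ Aset α = Bset (α / (α - 1)) := by
  have hα1 : 0 < α - 1 := sub_pos.2 h1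
  constructor
  · field_simp [hirr.ne_zero]
    ring
  · ext n
    rw [Aset, Bset, Set.mem_ofPred_eq, Set.mem_ofPred_eq, E_div_sub_one hirr h1.ne',
      div_pos_iff_of_pos_right hα1, neg_pos]

/-- For irrational `1 < α < 2` and `α' = α/(α-1)`, we have `1/α + 1/α' = 1`
and `A_α = B_{α'}`. -/
theorem stmt1 (α : ℝ) (h1 : 1 < α) (h2 : α < 2) (hirr : Irrational α) :
    1 / α + 1 / (α / (α - 1)) = 1 ∧ Aset α = Bset (α / (α - 1)) :=
  stmt1_general α h1 hirr
end

section
/- Let α > 1 be irrational with convergents p_n/q_n, and E(p) = p − qα the error to the nearest multiple of α. If p is a positive integer with p < p_{n+1} and |E(p)| < |E(p_{n-1})|, then p = k·p_n or p = k·p_n + p_{n-1} for some positive integer k. -/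
/-- Data of the continued fraction expansion `α = [a 0; a 1, a 2, ...]` of an
irrational `α > 1`, with `t n` the successive complete quotients, and
`p n / q n` the convergents. -/
structure CF (α : ℝ) where
  a : ℕ → ℕ
  t : ℕ → ℝ
  p : ℕ → ℕ
  q : ℕ → ℕ
  t0 : t 0 = α
  ha : ∀ n, 1 ≤ a n
  floor_t : ∀ n, (a n : ℝ) = ⌊t n⌋
  t_rec : ∀ n, t n = a n + 1 / t (n + 1)
  p0 : p 0 = a 0
  p1 : p 1 = a 1 * a 0 + 1
  p_rec : ∀ n, p (n + 2) = a (n + 2) * p (n + 1) + p n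
  q0 : q 0 = 1
  q1 : q 1 = a 1
  q_rec : ∀ n, q (n + 2) = a (n + 2) * q (n + 1) + q n

/-- The numerators extended by two initial terms: `P 0 = p_{-2} = 0`,
`P 1 = p_{-1} = 1`, and `P (n+2) = p n`. -/
def CF.P {α : ℝ} (c : CF α) : ℕ → ℕ
  | 0 => 0
  | 1 => 1
  | n + 2 => c.p n

/-!
Unimodularity of the convergent matrix lets one write `p = x pₙ + y pₙ₋₁` and the nearest multiple
of `α` as `x qₙ + y qₙ₋₁` with integers `x, y`. Since the errors `δₘ = |pₘ - qₘ α|` alternate in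
sign, `|E p| = |x δₙ - y δₙ₋₁|`, which is `< δₙ₋₁` by hypothesis. Together with
`0 < p < aₙ₊₁ pₙ + pₙ₋₁` and `δₙ₋₁ = aₙ₊₁ δₙ + δₙ₊₁` this forces `y ∈ {0, 1}` and `x > 0`.
-/

lemma coeffs_of_abs_lt {a P₁ P₂ x y : ℤ} {d₁ d₂ d₃ : ℝ} (ha : 1 ≤ a) (hP₁ : 1 ≤ P₁)
    (hP₁₂ : P₁ ≤ P₂) (hd₂ : 0 < d₂) (hd₃ : 0 < d₃) (hd : d₁ = a * d₂ + d₃)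
    (hpos : 0 < x * P₂ + y * P₁) (hlt : x * P₂ + y * P₁ < a * P₂ + P₁)
    (hne : x * P₂ + y * P₁ ≠ P₁) (hsmall : |(x : ℝ) * d₂ - y * d₁| < d₁) :
    0 < x ∧ (y = 0 ∨ y = 1) := by
  obtain ⟨hlo, hhi⟩ := abs_lt.mp hsmall
  have haR : (1 : ℝ) ≤ a := by exact_mod_cast ha
  have hd₁ : 0 < d₁ := by nlinarith
  have hy₀ : 0 ≤ y := by
    by_contra! hy
    rcases le_or_gt 0 x with hx | hx
    · have : (y : ℝ) ≤ -1 := by exact_mod_cast (show y ≤ -1 by omega)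
      have : (0 : ℝ) ≤ x := by exact_mod_cast hx
      nlinarith
    · nlinarith
  have hy₁ : y ≤ 1 := by
    by_contra! hy
    have hyR : (2 : ℝ) ≤ y := by exact_mod_cast (show 2 ≤ y by omega)
    rcases le_or_gt x 0 with hx | hx
    · have : (x : ℝ) ≤ 0 := by exact_mod_cast hx
      nlinarith
    · have hxa : x ≤ a - 1 := by
        by_contra! h
        nlinarith
      have : (x : ℝ) ≤ a - 1 := by exact_mod_cast hxa
      nlinarith
  have hy : y = 0 ∨ y = 1 := by omega
  refine ⟨?_, hy⟩
  rcases hy with rfl | rfl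
  · simp only [zero_mul, add_zero] at hpos
    exact pos_of_mul_pos_left hpos (by omega)
  · by_contra! hx
    rcases hx.lt_or_eq with hx | rfl
    · nlinarith
    · simp at hne

lemma abs_E_le {α : ℝ} (hα : 0 < α) (m : ℕ) (z : ℤ) : |E α m| ≤ |(m : ℝ) - z * α| := by
  have key : ∀ r : ℝ, (m : ℝ) - r * α = α * ((m : ℝ) / α - r) := fun r => by
    field_simp
  rw [E, key, key, abs_mul, abs_mul]
  exact mul_le_mul_of_nonneg_left (round_le _ z) (abs_nonneg α)

namespace CF

variable {α : ℝ} (c : CF α)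

/-- `Q m = q_{m-2}`, as for `CF.P`. -/
def Q : ℕ → ℕ
  | 0 => 1
  | 1 => 0
  | n + 2 => c.q n

lemma P_add_two : ∀ m, c.P (m + 2) = c.a m * c.P (m + 1) + c.P m
  | 0 => by simp [CF.P, c.p0]
  | 1 => by simp [CF.P, c.p1, c.p0]
  | m + 2 => by simp [CF.P, c.p_rec m]

lemma Q_add_two : ∀ m, c.Q (m + 2) = c.a m * c.Q (m + 1) + c.Q m
  | 0 => by simp [Q, c.q0]
  | 1 => by simp [Q, c.q1, c.q0]
  | m + 2 => by simp [Q, c.q_rec m]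

lemma one_le_P : ∀ m, 1 ≤ c.P (m + 1)
  | 0 => by simp [CF.P]
  | m + 1 => by
    rw [P_add_two]
    nlinarith [one_le_P m, c.ha m]

lemma P_le_P_succ (m : ℕ) : c.P (m + 1) ≤ c.P (m + 2) := by
  rw [P_add_two]
  nlinarith [c.ha m]

lemma one_le_Q : ∀ m, 1 ≤ c.Q (m + 2)
  | 0 => by simp [Q, c.q0]
  | m + 1 => by
    rw [Q_add_two]
    nlinarith [one_le_Q m, c.ha (m + 1)]

lemma one_le_t (m : ℕ) : 1 ≤ c.t m := by
  have : (1 : ℝ) ≤ c.a m := by exact_mod_cast c.ha m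
  linarith [c.floor_t m, Int.floor_le (c.t m)]

lemma P_mul_Q_sub_P_mul_Q :
    ∀ m, (c.P (m + 1) : ℤ) * c.Q m - c.P m * c.Q (m + 1) = (-1) ^ m
  | 0 => by simp [CF.P, Q]
  | m + 1 => by
    have hP : (c.P (m + 2) : ℤ) = c.a m * c.P (m + 1) + c.P m := by
      exact_mod_cast c.P_add_two m
    have hQ : (c.Q (m + 2) : ℤ) = c.a m * c.Q (m + 1) + c.Q m := by
      exact_mod_cast c.Q_add_two m
    rw [pow_succ, hP, hQ]
    linear_combination (-1 : ℤ) * P_mul_Q_sub_P_mul_Q m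

lemma exists_eq_P_and_eq_Q (m : ℕ) (p q : ℤ) :
    ∃ x y : ℤ, p = x * c.P (m + 1) + y * c.P m ∧ q = x * c.Q (m + 1) + y * c.Q m := by
  have hdet := c.P_mul_Q_sub_P_mul_Q m
  have hsq : ((-1 : ℤ)) ^ m * (-1) ^ m = 1 := by rw [← pow_add, ← two_mul, pow_mul]; simp
  refine ⟨(-1) ^ m * (p * c.Q m - q * c.P m), (-1) ^ m * (q * c.P (m + 1) - p * c.Q (m + 1)),
    ?_, ?_⟩
  · linear_combination (-(-1 : ℤ) ^ m * p) * hdet - p * hsq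
  · linear_combination (-(-1 : ℤ) ^ m * q) * hdet - q * hsq

lemma alpha_mul_eq : ∀ m, α * (c.Q (m + 1) * c.t m + c.Q m) = c.P (m + 1) * c.t m + c.P m
  | 0 => by simp [CF.P, Q, c.t0]
  | m + 1 => by
    have ih := alpha_mul_eq m
    have ht : c.t (m + 1) ≠ 0 := (zero_lt_one.trans_le (c.one_le_t (m + 1))).ne'
    rw [c.t_rec m] at ih
    have hP : (c.P (m + 2) : ℝ) = c.a m * c.P (m + 1) + c.P m := by
      exact_mod_cast c.P_add_two m
    have hQ : (c.Q (m + 2) : ℝ) = c.a m * c.Q (m + 1) + c.Q m := by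
      exact_mod_cast c.Q_add_two m
    rw [hP, hQ]
    field_simp at ih ⊢
    linear_combination ih

/-- `δ m = |P m - Q m * α|`, see `P_sub_Q_mul_alpha`. -/
noncomputable def δ (m : ℕ) : ℝ := c.t m / (c.Q (m + 1) * c.t m + c.Q m)

lemma denom_pos (m : ℕ) : 0 < (c.Q (m + 1) : ℝ) * c.t m + c.Q m := by
  have ht := c.one_le_t m
  match m with
  | 0 => simp [Q]
  | m + 1 =>
    have : (1 : ℝ) ≤ c.Q (m + 2) := by exact_mod_cast c.one_le_Q m
    positivity

lemma δ_pos (m : ℕ) : 0 < c.δ m :=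
  div_pos (zero_lt_one.trans_le (c.one_le_t m)) (c.denom_pos m)

lemma P_sub_Q_mul_alpha (m : ℕ) : (c.P m : ℝ) - c.Q m * α = (-1) ^ (m + 1) * c.δ m := by
  have hdet : (c.P (m + 1) : ℝ) * c.Q m - c.P m * c.Q (m + 1) = (-1) ^ m := by
    exact_mod_cast c.P_mul_Q_sub_P_mul_Q m
  rw [δ, mul_div_assoc', eq_div_iff (c.denom_pos m).ne']
  linear_combination (-(c.Q m : ℝ)) * c.alpha_mul_eq m - c.t m * hdet

lemma δ_eq_mul_add (m : ℕ) : c.δ m = c.a m * c.δ (m + 1) + c.δ (m + 2) := by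
  have hP : (c.P (m + 2) : ℝ) = c.a m * c.P (m + 1) + c.P m := by
    exact_mod_cast c.P_add_two m
  have hQ : (c.Q (m + 2) : ℝ) = c.a m * c.Q (m + 1) + c.Q m := by
    exact_mod_cast c.Q_add_two m
  have h := c.P_sub_Q_mul_alpha (m + 2)
  rw [hP, hQ] at h
  have hm : ((-1 : ℝ)) ^ m ≠ 0 := pow_ne_zero _ (by norm_num)
  apply mul_left_cancel₀ hm
  linear_combination (-1 : ℝ) * h + c.a m * c.P_sub_Q_mul_alpha (m + 1)
    + c.P_sub_Q_mul_alpha m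

lemma abs_E_P_le (m : ℕ) : |E α (c.P m)| ≤ c.δ m := by
  have h := abs_E_le (zero_lt_one.trans_le (c.t0 ▸ c.one_le_t 0)) (c.P m) (c.Q m)
  rwa [Int.cast_natCast, c.P_sub_Q_mul_alpha, abs_mul, abs_pow, abs_neg, abs_one, one_pow,
    one_mul, abs_of_pos (c.δ_pos m)] at h

lemma abs_combination_sub_mul_alpha (m : ℕ) (x y : ℤ) :
    |((x * c.P (m + 1) + y * c.P m : ℤ) : ℝ) - ((x * c.Q (m + 1) + y * c.Q m : ℤ) : ℝ) * α| =
      |(x : ℝ) * c.δ (m + 1) - y * c.δ m| := by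
  have h : ((x * c.P (m + 1) + y * c.P m : ℤ) : ℝ) - ((x * c.Q (m + 1) + y * c.Q m : ℤ) : ℝ) * α
      = (-1) ^ m * ((x : ℝ) * c.δ (m + 1) - y * c.δ m) := by
    push_cast
    linear_combination (x : ℝ) * c.P_sub_Q_mul_alpha (m + 1) + y * c.P_sub_Q_mul_alpha m
  rw [h, abs_mul, abs_pow, abs_neg, abs_one, one_pow, one_mul]

end CF

/-- Indices are shifted by two: `c.P (n+1) = p_{n-1}`, `c.P (n+2) = p_n`, `c.P (n+3) = p_{n+1}`. -/
theorem stmt4_general (α : ℝ) (c : CF α) (n : ℕ)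
    (p : ℕ) (hp : 0 < p) (hlt : p < c.P (n + 3))
    (hE : |E α p| < |E α (c.P (n + 1))|) :
    ∃ k : ℕ, 0 < k ∧
      (p = k * c.P (n + 2) ∨ p = k * c.P (n + 2) + c.P (n + 1)) := by
  obtain ⟨x, y, hpxy, hqxy⟩ := c.exists_eq_P_and_eq_Q (n + 1) p (round ((p : ℝ) / α))
  have hsmall : |(x : ℝ) * c.δ (n + 2) - y * c.δ (n + 1)| < c.δ (n + 1) :=
    calc _ = |E α p| := by
          rw [E, ← c.abs_combination_sub_mul_alpha, ← hpxy, ← hqxy, Int.cast_natCast]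
      _ < c.δ (n + 1) := hE.trans_le (c.abs_E_P_le (n + 1))
  have hlt' : (p : ℤ) < c.a (n + 1) * c.P (n + 2) + c.P (n + 1) := by
    exact_mod_cast c.P_add_two (n + 1) ▸ hlt
  have hne : (p : ℤ) ≠ c.P (n + 1) := by
    rintro h
    rw [show p = c.P (n + 1) by exact_mod_cast h] at hE
    exact hE.false
  obtain ⟨hx, hy⟩ := coeffs_of_abs_lt (by exact_mod_cast c.ha (n + 1))
    (by exact_mod_cast c.one_le_P n) (by exact_mod_cast c.P_le_P_succ n) (c.δ_pos (n + 2))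
    (c.δ_pos (n + 3)) (c.δ_eq_mul_add (n + 1)) (hpxy ▸ by exact_mod_cast hp) (hpxy ▸ hlt')
    (hpxy ▸ hne) hsmall
  lift x to ℕ using hx.le
  refine ⟨x, by exact_mod_cast hx, ?_⟩
  rcases hy with rfl | rfl
  · left; exact_mod_cast (by simpa using hpxy : (p : ℤ) = x * c.P (n + 2))
  · right; exact_mod_cast (by simpa using hpxy : (p : ℤ) = x * c.P (n + 2) + c.P (n + 1))

/-- Lemma 1: if `p < p_{n+1}` and `|E p| < |E p_{n-1}|` then `p = k * p_n`
or `p = k * p_n + p_{n-1}` for some positive `k`.  Indices are shifted by two: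
`c.P (n+1) = p_{n-1}`, `c.P (n+2) = p_n`, `c.P (n+3) = p_{n+1}`. -/
theorem stmt4 (α : ℝ) (hα : 1 < α) (hirr : Irrational α) (c : CF α) (n : ℕ)
    (p : ℕ) (hp : 0 < p) (hlt : p < c.P (n + 3))
    (hE : |E α p| < |E α (c.P (n + 1))|) :
    ∃ k : ℕ, 0 < k ∧
      (p = k * c.P (n + 2) ∨ p = k * c.P (n + 2) + c.P (n + 1)) :=
  stmt4_general α c n p hp hlt hE
end

section
/- Let α > 1 be irrational, A_α = {n : E(n) < 0}, B_α = {n : E(n) > 0}, and let S_α be the set of positive integers s such that no two distinct elements of A_α sum to s and no two distinct elements of B_α sum to s. If E(x) > 0, then x ∈ S_α if and only if there is no even positive integer z < 2x with 0 < E(z) < E(x). -/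
open AddCommGroup

theorem AddCommGroup.ModEq.eq_of_abs_sub_lt {G : Type*} [AddCommGroup G] [LinearOrder G]
    [IsOrderedAddMonoid G] {p a b : G} (h : a ≡ b [PMOD p]) (hab : |b - a| < p) : a = b := by
  obtain ⟨m, hm⟩ := modEq_iff_zsmul'.mp h
  obtain rfl | hm0 := eq_or_ne m 0
  · simpa [sub_eq_zero, eq_comm] using hm
  have : p ≤ |b - a| := calc
    p ≤ |p| := le_abs_self p
    _ = (1 : ℤ) • |p| := (one_zsmul _).symm
    _ ≤ |m| • |p| := zsmul_le_zsmul_left (abs_nonneg p) (Int.one_le_abs hm0)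
    _ = |b - a| := by rw [hm, abs_zsmul]
  exact absurd hab this.not_gt

theorem E_zero (α : ℝ) : E α 0 = 0 := by simp [E]

theorem E_modEq_natCast (α : ℝ) (n : ℕ) : E α n ≡ n [PMOD α] :=
  modEq_iff_zsmul'.mpr ⟨round ((n : ℝ) / α), by simp [E]⟩

section

variable {α : ℝ}

theorem E_modEq_add_sub {m n p q : ℕ} (h : m + n = p + q) :
    E α m ≡ E α p + E α q - E α n [PMOD α] := by
  have hcast : ((m : ℝ) + n) = p + q := by exact_mod_cast h
  refine modEq_sub_iff_add_modEq.mpr ?_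
  calc E α m + E α n ≡ m + n [PMOD α] := (E_modEq_natCast α m).add (E_modEq_natCast α n)
    _ = p + q := hcast
    _ ≡ E α p + E α q [PMOD α] := ((E_modEq_natCast α p).add (E_modEq_natCast α q)).symm

theorem abs_E_le_s6 (hα : 0 < α) (n : ℕ) : |E α n| ≤ α / 2 := by
  have h := abs_sub_round ((n : ℝ) / α)
  have hE : E α n = ((n : ℝ) / α - round ((n : ℝ) / α)) * α := by
    simp only [E]; field_simp
  rw [hE, abs_mul, abs_of_pos hα]
  nlinarith

theorem abs_E_lt (hα : 0 < α) (hirr : Irrational α) (n : ℕ) : |E α n| < α / 2 := by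
  refine (abs_E_le_s6 hα n).lt_of_ne fun h => ?_
  set r := round ((n : ℝ) / α)
  have hn : (n : ℝ) = r * α + E α n := by simp [E, r]
  -- `E α n = ±α/2` would make `2n = (2r ± 1) α`
  rcases (abs_eq (by positivity)).mp h with h | h
  · exact (hirr.intCast_mul (m := 2 * r + 1) (by omega)).ne_nat (2 * n) (by push_cast; linarith)
  · exact (hirr.intCast_mul (m := 2 * r - 1) (by omega)).ne_nat (2 * n) (by push_cast; linarith)

theorem E_injective (hirr : Irrational α) : Function.Injective (E α) := by
  intro a b h
  have hab : (a : ℝ) ≡ b [PMOD α] :=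
    (E_modEq_natCast α a).symm.trans (h ▸ E_modEq_natCast α b)
  obtain ⟨m, hm⟩ := modEq_iff_zsmul'.mp hab
  obtain rfl | hm0 := eq_or_ne m 0
  · simpa [sub_eq_zero, eq_comm] using hm
  · exact absurd (by simpa using hm.symm) ((hirr.intCast_mul hm0).ne_int ((b : ℤ) - a))

theorem E_eq_of_modEq (hα : 0 < α) {n : ℕ} {y : ℝ} (h : E α n ≡ y [PMOD α])
    (hy : |y| < α / 2) : E α n = y := by
  refine h.eq_of_abs_sub_lt (abs_lt.mpr ?_)
  have := abs_le.mp (abs_E_le_s6 hα n)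
  have := abs_lt.mp hy
  constructor <;> linarith

theorem E_add_modEq (a b : ℕ) : E α (a + b) ≡ E α a + E α b [PMOD α] := by
  simpa [E_zero] using E_modEq_add_sub (α := α) (m := a + b) (n := 0) (p := a) (q := b) rfl

theorem E_add_eq_of_pos (hα : 0 < α) {a b : ℕ} (ha : 0 < E α a) (hb : 0 < E α b)
    (hab : 0 < E α (a + b)) : E α (a + b) = E α a + E α b := by
  refine (E_add_modEq a b).eq_of_abs_sub_lt (abs_lt.mpr ?_)
  have := abs_le.mp (abs_E_le_s6 hα a)
  have := abs_le.mp (abs_E_le_s6 hα b)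
  have := abs_le.mp (abs_E_le_s6 hα (a + b))
  constructor <;> linarith

theorem E_add_eq_of_neg (hα : 0 < α) {a b : ℕ} (ha : E α a < 0) (hb : E α b < 0)
    (hab : 0 < E α (a + b)) : E α (a + b) = E α a + E α b + α := by
  have h : E α (a + b) ≡ E α a + E α b + α [PMOD α] :=
    (E_add_modEq a b).trans (add_modEq_left.mpr self_modEq_zero).symm
  refine h.eq_of_abs_sub_lt (abs_lt.mpr ?_)
  have := abs_le.mp (abs_E_le_s6 hα a)
  have := abs_le.mp (abs_E_le_s6 hα b)
  have := abs_le.mp (abs_E_le_s6 hα (a + b))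
  constructor <;> linarith

theorem pos_of_E_ne_zero {n : ℕ} (h : E α n ≠ 0) : 0 < n :=
  Nat.pos_of_ne_zero fun hn => h (hn ▸ E_zero α)

theorem mem_Sset_iff {x : ℕ} :
    x ∈ Sset α ↔ 0 < x ∧ ¬∃ a b, a ≠ b ∧ a + b = x ∧ 0 < E α a * E α b := by
  simp only [Sset, Aset, Bset, Set.mem_ofPred_eq, mul_pos_iff, not_exists, not_and]
  refine and_congr_right fun _ => ⟨?_, ?_⟩
  · rintro ⟨hA, hB⟩ a b hab hsum (⟨ha, hb⟩ | ⟨ha, hb⟩)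
    · exact hB a ⟨pos_of_E_ne_zero ha.ne', ha⟩ b ⟨pos_of_E_ne_zero hb.ne', hb⟩ hab hsum
    · exact hA a ⟨pos_of_E_ne_zero ha.ne, ha⟩ b ⟨pos_of_E_ne_zero hb.ne, hb⟩ hab hsum
  · intro h
    exact ⟨fun a ha b hb hab hsum => h a b hab hsum (.inr ⟨ha.2, hb.2⟩),
      fun a ha b hb hab hsum => h a b hab hsum (.inl ⟨ha.2, hb.2⟩)⟩

theorem exists_even_of_add_eq (hα : 0 < α) (hirr : Irrational α) {a b : ℕ} (hab : a ≠ b)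
    (hsame : 0 < E α a * E α b) (hpos : 0 < E α (a + b)) :
    ∃ z : ℕ, 0 < z ∧ Even z ∧ z < 2 * (a + b) ∧ 0 < E α z ∧ E α z < E α (a + b) := by
  wlog hlt : E α a < E α b generalizing a b
  · have hgt := ((E_injective hirr).ne hab).lt_or_gt.resolve_left hlt
    rw [add_comm] at hpos ⊢
    exact this hab.symm (mul_comm (E α a) _ ▸ hsame) hpos hgt
  have hba : 0 < E α (a + b) + E α a - E α b := by
    have := abs_lt.mp (abs_E_lt hα hirr a)
    rcases mul_pos_iff.mp hsame with ⟨ha, hb⟩ | ⟨ha, hb⟩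
    · linarith [E_add_eq_of_pos hα ha hb hpos]
    · linarith [E_add_eq_of_neg hα ha hb hpos]
  have h2a : E α (a + a) = E α (a + b) + E α a - E α b :=
    E_eq_of_modEq hα (E_modEq_add_sub (by omega))
      (abs_lt.mpr ⟨by linarith, by linarith [abs_lt.mp (abs_E_lt hα hirr (a + b))]⟩)
  have ha := pos_of_E_ne_zero (left_ne_zero_of_mul hsame.ne')
  have hb := pos_of_E_ne_zero (right_ne_zero_of_mul hsame.ne')
  exact ⟨a + a, by omega, ⟨a, rfl⟩, by omega, by linarith, by linarith⟩

theorem exists_add_eq_of_even (hα : 0 < α) (hirr : Irrational α) {w x : ℕ} (hw : 0 < w)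
    (hwx : w < x) (hpos : 0 < E α (w + w)) (hlt : E α (w + w) < E α x) :
    ∃ a b, a ≠ b ∧ a + b = x ∧ 0 < E α a * E α b := by
  have hEw : E α w ≠ 0 := fun h => hw.ne' (E_injective hirr (h.trans (E_zero α).symm))
  have hx := abs_lt.mp (abs_E_lt hα hirr x)
  have hw' := abs_lt.mp (abs_E_lt hα hirr w)
  have hmod : E α (x - w) ≡ E α x + E α w - E α (w + w) [PMOD α] :=
    E_modEq_add_sub (by omega)
  suffices E α w < E α (x - w) ∧ 0 < E α w * E α (x - w) from
    ⟨w, x - w, ne_of_apply_ne (E α) this.1.ne, by omega, this.2⟩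
  rcases hEw.lt_or_gt with hneg | hpos'
  · have hww := E_add_eq_of_neg hα hneg hneg hpos
    have := E_eq_of_modEq hα hmod (abs_lt.mpr ⟨by linarith, by linarith⟩)
    exact ⟨by linarith, mul_pos_of_neg_of_neg hneg (by linarith)⟩
  · have hww := E_add_eq_of_pos hα hpos' hpos' hpos
    have := E_eq_of_modEq hα hmod (abs_lt.mpr ⟨by linarith, by linarith⟩)
    exact ⟨by linarith, mul_pos hpos' (by linarith)⟩

end

theorem stmt6_general (α : ℝ) (hα : 1 < α) (hirr : Irrational α) (x : ℕ)
    (hEx : 0 < E α x) :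
    x ∈ Sset α ↔
      ¬∃ z : ℕ, 0 < z ∧ Even z ∧ z < 2 * x ∧ 0 < E α z ∧ E α z < E α x := by
  have hα0 : 0 < α := one_pos.trans hα
  rw [mem_Sset_iff, and_iff_right (pos_of_E_ne_zero hEx.ne'), not_iff_not]
  constructor
  · rintro ⟨a, b, hab, rfl, hsame⟩
    exact exists_even_of_add_eq hα0 hirr hab hsame hEx
  · rintro ⟨z, hz, ⟨w, rfl⟩, hzx, hpos, hlt⟩
    exact exists_add_eq_of_even hα0 hirr (by omega) (by omega) hpos hlt

/-- If `E x > 0`, then `x ∈ S_α` iff there is no even `z < 2x` with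
`0 < E z < E x`. -/
theorem stmt6 (α : ℝ) (hα : 1 < α) (hirr : Irrational α) (x : ℕ)
    (hx : 0 < x) (hEx : 0 < E α x) :
    x ∈ Sset α ↔
      ¬∃ z : ℕ, 0 < z ∧ Even z ∧ z < 2 * x ∧ 0 < E α z ∧ E α z < E α x :=
  stmt6_general α hα hirr x hEx
end

section
/- Let S ⊆ ℕ⁺ contain d, a+d, c, and b+c where gcd(a,b) = 1, a ≤ c, and b ≤ d. Then all positive integers less than a + b lie in the same connected component of the graph G(S). -/
/-- The graph `G S` on the positive integers with an edge between distinct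
`x, y` whenever `x + y ∈ S`. -/
def G (S : Set ℕ+) : SimpleGraph ℕ+ where
  Adj x y := x ≠ y ∧ x + y ∈ S
  symm := by
    constructor
    intro x y h
    exact ⟨h.1.symm, by rw [add_comm]; exact h.2⟩
  loopless := by
    constructor
    intro x h
    exact h.1 rfl

/-- The partition `{A, Aᶜ}` of `ℕ+` avoids `S`: no two distinct elements of
the same part sum to an element of `S`. -/
def Avoids (A S : Set ℕ+) : Prop :=
  (∀ x ∈ A, ∀ y ∈ A, x ≠ y → x + y ∉ S) ∧
  (∀ x ∈ Aᶜ, ∀ y ∈ Aᶜ, x ≠ y → x + y ∉ S)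

/-- `S` is avoidable: some partition of `ℕ+` avoids it. -/
def Avoidable (S : Set ℕ+) : Prop := ∃ A, Avoids A S

/-- `S` is uniquely avoidable: exactly one partition of `ℕ+` avoids it. -/
def UniquelyAvoidable (S : Set ℕ+) : Prop :=
  ∃ A, Avoids A S ∧ ∀ A', Avoids A' S → A' = A ∨ A' = Aᶜ

/-! Two vertices whose sum lies in `S` are joined by an edge or equal, so `d, a + d ∈ S`
give the path `x — (d - x) — (x + a)` for every `x < d`. Hence, for `n = a + b`, every
`0 < x < n` other than `b` is connected to `(x + a) % n`: directly by `x — x + a` when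
`x < b ≤ d`, and by `x - b — x` when `x - b < a ≤ c`. Since `a` is a unit mod `n`, iterating
`x ↦ (x + a) % n` from `0` runs through all residues; the only steps not covered above are
`0 ↦ a` and `b ↦ 0`, which enter and leave the positive vertices. -/

lemma Nat.forall_lt_of_add_mod_closed {a n : ℕ} (han : a.Coprime n) {P : ℕ → Prop}
    (h0 : P 0) (hstep : ∀ x < n, P x → P ((x + a) % n)) : ∀ z < n, P z := by
  intro z hz
  have hn : 0 < n := by omega
  have hmul : ∀ k, P (a * k % n) := by
    intro k
    induction k with
    | zero => simpa using h0
    | succ k ih => simpa [mul_add, Nat.add_mod_mod] using hstep _ (Nat.mod_lt _ hn) ih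
  obtain ⟨k, -, hk⟩ := Nat.exists_mul_mod_eq_of_coprime z han hn.ne'
  simpa [hk, Nat.mod_eq_of_lt hz] using hmul k

namespace G

variable {S : Set ℕ+}

lemma reachable_of_add_mem {x y : ℕ+} (h : x + y ∈ S) : (G S).Reachable x y := by
  by_cases hxy : x = y
  · exact hxy ▸ .refl x
  · exact SimpleGraph.Adj.reachable ⟨hxy, h⟩

lemma reachable_add_of_lt {a d x : ℕ+} (hd : d ∈ S) (had : a + d ∈ S) (hx : x < d) :
    (G S).Reachable x (x + a) := by
  have hsum : x + (d - x) = d := PNat.add_sub_of_lt hx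
  refine (reachable_of_add_mem (y := d - x) (by rwa [hsum])).trans
    (reachable_of_add_mem ?_)
  rwa [← add_assoc, add_comm (d - x), hsum, add_comm]

lemma reachable_add_mod {a b c d : ℕ+} (hac : a ≤ c) (hbd : b ≤ d)
    (hd : d ∈ S) (had : a + d ∈ S) (hc : c ∈ S) (hbc : b + c ∈ S) {x y : ℕ+}
    (hx : (x : ℕ) < a + b) (hxb : (x : ℕ) ≠ b) (hy : (y : ℕ) = (x + a) % (a + b)) :
    (G S).Reachable x y := by
  rw [← PNat.coe_le_coe] at hac hbd
  rcases Nat.lt_or_gt_of_ne hxb with hlt | hgt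
  · obtain rfl : y = x + a := PNat.eq <| by
      rw [hy, PNat.add_coe, Nat.mod_eq_of_lt (by omega)]
    exact reachable_add_of_lt hd had (PNat.coe_lt_coe _ _ |>.mp (by omega))
  · have hwrap : ((x : ℕ) + a) % (a + b) = x + a - (a + b) := by
      rw [Nat.mod_eq_sub_mod (by omega), Nat.mod_eq_of_lt (by omega)]
    obtain rfl : x = y + b := PNat.eq <| by rw [PNat.add_coe]; omega
    exact (reachable_add_of_lt hc hbc (PNat.coe_lt_coe _ _ |>.mp (by omega))).symm

end G

/-- If `S` contains `d`, `a + d`, `c`, `b + c` with `gcd a b = 1`, `a ≤ c` and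
`b ≤ d`, then all positive integers less than `a + b` lie in the same
connected component of `G S`. -/
theorem stmt13 (S : Set ℕ+) (a b c d : ℕ+)
    (hab : Nat.Coprime a b) (hac : a ≤ c) (hbd : b ≤ d)
    (hd : d ∈ S) (had : a + d ∈ S) (hc : c ∈ S) (hbc : b + c ∈ S) :
    ∀ x y : ℕ+, x < a + b → y < a + b → (G S).Reachable x y := by
  have hcop : (a : ℕ).Coprime (a + b) := Nat.coprime_self_add_right.mpr hab
  have hreach : ∀ z < (a : ℕ) + b, ∀ y : ℕ+, (y : ℕ) = z → (G S).Reachable a y := by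
    refine Nat.forall_lt_of_add_mod_closed hcop (fun y hy => absurd hy y.ne_zero) ?_
    intro x hx ih y hy
    rcases Nat.eq_zero_or_pos x with rfl | hpos
    · obtain rfl : y = a := PNat.eq <| by rw [hy, zero_add, Nat.mod_eq_of_lt (by simp)]
      rfl
    by_cases hxb : x = b
    · simp [hxb, add_comm] at hy
    exact (ih ⟨x, hpos⟩ rfl).trans (G.reachable_add_mod hac hbd hd had hc hbc hx hxb hy)
  intro x y hx hy
  rw [← PNat.coe_lt_coe, PNat.add_coe] at hx hy
  exact (hreach x hx x rfl).symm.trans (hreach y hy y rfl)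
end

section
/- Let S ⊆ ℕ⁺. If for every N there exist a, b, c, d with a + b > N, gcd(a,b) = 1, a ≤ c, b ≤ d, and d, a+d, c, b+c all in S, then G(S) is connected; hence if S is avoidable, it is uniquely avoidable. -/
/-!
Suppose `v ∈ S` and `u + v ∈ S`. For `x < v`, the vertex `v - x` is joined to both `x`
and `x + u`, so `x` and `x + u` lie in one component of `G S`. A quadruple `a, b, c, d`
as in the hypothesis thus links `x` to `x + a` for `x < b ≤ d` and `x` to `x + b` for
`x < a ≤ c`. Together these moves realise `x ↦ x + a mod (a + b)` on `[1, a + b)`, and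
since `a` and `a + b` are coprime the orbit of `a` under it exhausts `[1, a + b)`. As
`a + b` is unbounded, `G S` is connected; a connected graph has at most one 2-colouring
up to swapping the colours, which is the uniqueness of the avoiding partition.
-/

namespace SimpleGraph

variable {H : SimpleGraph ℕ+} {a b : ℕ+}

lemma reachable_mul_mod_of_coprime (hab : Nat.Coprime a b)
    (hadd : ∀ x : ℕ+, x < b → H.Reachable x (x + a))
    (hsub : ∀ x : ℕ+, x < a → H.Reachable x (x + b)) (j : ℕ) (hj : j < a + b) (y : ℕ+)
    (hy : (y : ℕ) = j * a % (a + b)) : H.Reachable a y := by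
  induction j generalizing y with
  | zero => simp at hy
  | succ j ih =>
    rcases j.eq_zero_or_pos with rfl | hj0
    · obtain rfl : y = a := PNat.coe_injective <| by
        rw [hy, zero_add, one_mul, Nat.mod_eq_of_lt (by simp)]
      rfl
    set p := j * a % (a + b) with hp
    have hp0 : p ≠ 0 := by
      have hcop : Nat.Coprime (a + b) a := by
        rw [Nat.coprime_comm, add_comm, Nat.coprime_add_self_right]; exact hab
      intro h
      have := Nat.le_of_dvd hj0 <| hcop.dvd_of_dvd_mul_right (Nat.dvd_of_mod_eq_zero h)
      omega
    have hpM : p < a + b := Nat.mod_lt _ (by positivity)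
    have hx := ih (by omega) ⟨p, Nat.pos_of_ne_zero hp0⟩ rfl
    have hyp : (y : ℕ) = (p + a) % (a + b) := by rw [hy, hp, Nat.mod_add_mod, add_one_mul]
    by_cases hlt : p + a < a + b
    · rw [Nat.mod_eq_of_lt hlt] at hyp
      obtain rfl : y = ⟨p, Nat.pos_of_ne_zero hp0⟩ + a := PNat.coe_injective hyp
      exact hx.trans (hadd _ (show p < b by omega))
    · rw [Nat.mod_eq_sub_mod (by omega), Nat.mod_eq_of_lt (by omega)] at hyp
      have hyb : y + b = ⟨p, Nat.pos_of_ne_zero hp0⟩ := PNat.coe_injective <| by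
        simp only [PNat.add_coe, PNat.mk_coe]; omega
      exact hx.trans (hyb ▸ hsub y (show (y : ℕ) < a by omega)).symm

lemma reachable_of_lt_add_of_coprime (hab : Nat.Coprime a b)
    (hadd : ∀ x : ℕ+, x < b → H.Reachable x (x + a))
    (hsub : ∀ x : ℕ+, x < a → H.Reachable x (x + b)) (n : ℕ+) (hn : (n : ℕ) < a + b) :
    H.Reachable a n := by
  have hcop : Nat.Coprime a (a + b) := by
    rw [add_comm, Nat.coprime_add_self_right]; exact hab
  obtain ⟨m, -, hm⟩ := Nat.exists_mul_mod_eq_of_coprime n hcop (by positivity)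
  refine reachable_mul_mod_of_coprime hab hadd hsub (m % (a + b)) (Nat.mod_lt _ (by positivity))
    n ?_
  rw [Nat.mod_mul_mod, mul_comm, hm, Nat.mod_eq_of_lt hn]

end SimpleGraph

section

variable {S : Set ℕ+}

lemma reachable_of_add_mem {x y : ℕ+} (h : x + y ∈ S) : (G S).Reachable x y := by
  by_cases hxy : x = y
  · exact hxy ▸ SimpleGraph.Reachable.refl x
  · exact SimpleGraph.Adj.reachable ⟨hxy, h⟩

lemma reachable_add_of_mem {u v x : ℕ+} (hv : v ∈ S) (huv : u + v ∈ S) (hx : x < v) :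
    (G S).Reachable x (x + u) := by
  have hw : x + (v - x) = v := PNat.add_sub_of_lt hx
  have hsum : v - x + (x + u) = u + v :=
    calc v - x + (x + u) = u + (x + (v - x)) := by ring
      _ = u + v := by rw [hw]
  exact (reachable_of_add_mem (hw ▸ hv)).trans (reachable_of_add_mem (hsum ▸ huv))

lemma connected_G
    (h : ∀ N : ℕ, ∃ a b c d : ℕ+, N < (a : ℕ) + b ∧ Nat.Coprime a b ∧
      a ≤ c ∧ b ≤ d ∧ d ∈ S ∧ a + d ∈ S ∧ c ∈ S ∧ b + c ∈ S) :
    (G S).Connected := by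
  refine (SimpleGraph.connected_iff _).2 ⟨fun x y => ?_, ⟨1⟩⟩
  obtain ⟨a, b, c, d, hN, hab, hac, hbd, hd, had, hc, hbc⟩ := h (x + y)
  have reach (n : ℕ+) (hn : (n : ℕ) < a + b) : (G S).Reachable a n :=
    SimpleGraph.reachable_of_lt_add_of_coprime hab
      (fun x hx => reachable_add_of_mem hd had (hx.trans_le hbd))
      (fun x hx => reachable_add_of_mem hc hbc (hx.trans_le hac)) n hn
  exact (reach x (by omega)).symm.trans (reach y (by omega))

namespace Avoids

variable {A A' : Set ℕ+}

open Classical in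
noncomputable def coloring (hA : Avoids A S) : (G S).Coloring Bool :=
  SimpleGraph.Coloring.mk (fun x => decide (x ∈ A)) fun {x y} ⟨hne, hxy⟩ => by
    by_cases hx : x ∈ A <;> by_cases hy : y ∈ A <;> simp only [hx, hy] <;> simp
    · exact hA.1 x hx y hy hne hxy
    · exact hA.2 x hx y hy hne hxy

open Classical in
lemma coloring_apply (hA : Avoids A S) (x : ℕ+) : hA.coloring x = decide (x ∈ A) := rfl

lemma eq_or_eq_compl_of_connected (hA : Avoids A S) (hA' : Avoids A' S)
    (hconn : (G S).Connected) : A' = A ∨ A' = Aᶜ := by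
  have key (x : ℕ+) : (1 ∈ A ↔ x ∈ A) ↔ (1 ∈ A' ↔ x ∈ A') := by
    obtain ⟨p⟩ := hconn.preconnected 1 x
    have hc := hA.coloring.even_length_iff_congr p
    have hc' := hA'.coloring.even_length_iff_congr p
    simp only [coloring_apply, decide_eq_true_eq] at hc hc'
    exact hc.symm.trans hc'
  by_cases h1 : (1 : ℕ+) ∈ A ↔ (1 : ℕ+) ∈ A'
  · left; ext x; have := key x; tauto
  · right; ext x; have := key x; simp only [Set.mem_compl_iff]; tauto

end Avoids

end

/-- If for every `N` the set `S` contains `d`, `a + d`, `c`, `b + c` with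
`gcd a b = 1`, `a ≤ c`, `b ≤ d` and `a + b > N`, then `G S` is connected;
hence if `S` is avoidable it is uniquely avoidable. -/
theorem stmt15 (S : Set ℕ+)
    (h : ∀ N : ℕ, ∃ a b c d : ℕ+, N < (a : ℕ) + b ∧ Nat.Coprime a b ∧
      a ≤ c ∧ b ≤ d ∧ d ∈ S ∧ a + d ∈ S ∧ c ∈ S ∧ b + c ∈ S) :
    (G S).Connected ∧ (Avoidable S → UniquelyAvoidable S) := by
  have hconn := connected_G h
  exact ⟨hconn, fun ⟨A, hA⟩ => ⟨A, hA, fun _ hA' => hA.eq_or_eq_compl_of_connected hA' hconn⟩⟩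
end
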